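/- arXiv:2402.01189 — 6 statements merged into one kernel-verified Lean document; each statement's English description precedes it below -/
import Mathlib

section
/- Let K/k and L/k be finite extensions of number fields with n := [K:k] and m := [L:k], and assume [KL:k] = [K:k]·[L:k], where KL is the compositum inside a fixed algebraic closure of k. Then Disc(KL) ≤ Disc(K)^m · Disc(L)^n. -/
open NumberField

/-- The relative discriminant ideal `disc(K/k)` of a field extension `K/k`: the ideal of `𝓞 k`
generated by the discriminants of all `[K:k]`-tuples of elements of `𝓞 K`. -/
noncomputable def relDiscIdeal (k : Type*) [Field k] (K : Type*) [Field K] [Algebra k K] :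
    Ideal (𝓞 k) :=
  Ideal.span {d : 𝓞 k | ∃ b : Fin (Module.finrank k K) → 𝓞 K,
    algebraMap (𝓞 k) k d = Algebra.discr k (fun i => (b i : K))}

/-- `Disc(K) = |N_{k/ℚ}(disc(K/k))|`, the absolute norm of the relative discriminant ideal. -/
noncomputable def Disc (k : Type*) [Field k] [NumberField k]
    (K : Type*) [Field K] [Algebra k K] : ℕ :=
  Ideal.absNorm (relDiscIdeal k K)

/-! ### Auxiliary lemmas -/

open scoped TensorProduct

open TensorProduct in
lemma trace_tmul' (k A B : Type*) [Field k] [CommRing A] [CommRing B] [Algebra k A] [Algebra k B]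
    [Module.Finite k A] [Module.Free k A] [Module.Finite k B] [Module.Free k B] (a : A) (b : B) :
    Algebra.trace k (A ⊗[k] B) (a ⊗ₜ b) = Algebra.trace k A a * Algebra.trace k B b := by
  have hmul : (Algebra.lmul k (A ⊗[k] B)) (a ⊗ₜ[k] b)
      = TensorProduct.map ((Algebra.lmul k A) a) ((Algebra.lmul k B) b) := by
    apply LinearMap.ext
    intro z
    induction z with
    | zero => simp
    | tmul x y => simp [Algebra.TensorProduct.tmul_mul_tmul]
    | add x y hx hy => simp only [map_add, mul_add] at hx hy ⊢; rw [← hx, ← hy]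
  rw [Algebra.trace_apply, Algebra.trace_apply, Algebra.trace_apply, hmul,
    LinearMap.trace_tensorProduct']

open TensorProduct in
lemma discr_tensor (k : Type*) [Field k] (A B C : Type*) [CommRing A] [CommRing B] [CommRing C]
    [Algebra k A] [Algebra k B] [Algebra k C]
    [Module.Finite k A] [Module.Free k A] [Module.Finite k B] [Module.Free k B]
    (e : (A ⊗[k] B) ≃ₐ[k] C) {ι κ : Type*} [Fintype ι] [Fintype κ] [DecidableEq ι] [DecidableEq κ]
    (x : ι → A) (y : κ → B) :
    Algebra.discr k (fun p : ι × κ => e (x p.1 ⊗ₜ y p.2)) =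
      Algebra.discr k x ^ Fintype.card κ * Algebra.discr k y ^ Fintype.card ι := by
  rw [Algebra.discr_def, Algebra.discr_def, Algebra.discr_def]
  have hm : Algebra.traceMatrix k (fun p : ι × κ => e (x p.1 ⊗ₜ y p.2)) =
      Matrix.kroneckerMap (· * ·) (Algebra.traceMatrix k x) (Algebra.traceMatrix k y) := by
    ext ⟨i, j⟩ ⟨i', j'⟩
    simp only [Algebra.traceMatrix_apply, Algebra.traceForm_apply, Matrix.kroneckerMap_apply]
    rw [← map_mul, Algebra.TensorProduct.tmul_mul_tmul, Algebra.trace_eq_of_algEquiv, trace_tmul']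
  rw [hm, Matrix.det_kronecker]

lemma discr_comp_equiv (k B : Type*) [Field k] [CommRing B] [Algebra k B]
    {ι ι' : Type*} [Fintype ι] [Fintype ι'] [DecidableEq ι] [DecidableEq ι']
    (q : ι' ≃ ι) (b : ι → B) :
    Algebra.discr k (b ∘ q) = Algebra.discr k b := by
  rw [Algebra.discr_def, Algebra.discr_def]
  have : Algebra.traceMatrix k (b ∘ q) = (Algebra.traceMatrix k b).submatrix q q := rfl
  rw [this, Matrix.det_submatrix_equiv_self]

open UniqueFactorizationMonoid in
lemma count_le_pow_iff {R : Type*} [CommRing R] [IsDedekindDomain R]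
    {P : Ideal R} (hP : Irreducible P) {I : Ideal R} (hI : I ≠ ⊥) (c : ℕ)
    [DecidableEq (Ideal R)] :
    I ≤ P ^ c ↔ c ≤ Multiset.count P (normalizedFactors I) := by
  have hP0 : P ≠ ⊥ := hP.ne_zero
  have hPc : P ^ c ≠ ⊥ := pow_ne_zero _ hP0
  rw [← Ideal.dvd_iff_le, dvd_iff_normalizedFactors_le_normalizedFactors hPc hI,
    normalizedFactors_pow, normalizedFactors_irreducible hP, normalize_eq, Multiset.le_iff_count]
  constructor
  · intro hh
    have := hh P
    simpa using this
  · intro hh Q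
    rw [Multiset.count_nsmul]
    by_cases hQ : Q = P
    · subst hQ; simpa using hh
    · simp [Multiset.count_singleton, hQ]

open UniqueFactorizationMonoid in
lemma key_dedekind {R : Type*} [CommRing R] [IsDedekindDomain R] {N : Ideal R} {S T : Set R}
    {m n : ℕ} (hS : Ideal.span S ≠ ⊥) (hT : Ideal.span T ≠ ⊥) (hN : N ≠ ⊥)
    (H : ∀ s ∈ S, ∀ t ∈ T, s ^ m * t ^ n ∈ N) :
    Ideal.span S ^ m * Ideal.span T ^ n ≤ N := by
  classical
  have hSm : Ideal.span S ^ m ≠ ⊥ := pow_ne_zero _ hS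
  have hTn : Ideal.span T ^ n ≠ ⊥ := pow_ne_zero _ hT
  have hprod : Ideal.span S ^ m * Ideal.span T ^ n ≠ ⊥ := mul_ne_zero hSm hTn
  rw [← Ideal.dvd_iff_le, dvd_iff_normalizedFactors_le_normalizedFactors hN hprod,
    Multiset.le_iff_count]
  intro P
  by_cases hP : P ∈ normalizedFactors N
  swap
  · simp [Multiset.count_eq_zero_of_notMem hP]
  have hPprime : Prime P := prime_of_normalized_factor P hP
  have hPirr : Irreducible P := hPprime.irreducible
  set v : Ideal R → ℕ := fun I => Multiset.count P (normalizedFactors I) with hv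
  have exmin : ∀ (U : Set R), Ideal.span U ≠ ⊥ →
      ∃ u ∈ U, u ≠ 0 ∧ v (Ideal.span {u}) ≤ v (Ideal.span U) := by
    intro U hU
    by_contra hcon
    push_neg at hcon
    have hle : Ideal.span U ≤ P ^ (v (Ideal.span U) + 1) := by
      rw [Ideal.span_le]
      intro u hu
      by_cases hu0 : u = 0
      · simp [hu0]
      have h1 : v (Ideal.span U) + 1 ≤ v (Ideal.span {u}) := hcon u hu hu0
      have h2 : Ideal.span {u} ≤ P ^ (v (Ideal.span {u})) := by
        rw [count_le_pow_iff hPirr (by simpa [Ideal.span_singleton_eq_bot] using hu0)]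
      have := h2.trans (Ideal.pow_le_pow_right h1)
      exact this (Ideal.subset_span rfl)
    rw [count_le_pow_iff hPirr hU] at hle
    simp only [hv] at hle
    omega
  obtain ⟨s₀, hs₀S, hs₀0, hs₀⟩ := exmin S hS
  obtain ⟨t₀, ht₀T, ht₀0, ht₀⟩ := exmin T hT
  have hmem : s₀ ^ m * t₀ ^ n ∈ N := H s₀ hs₀S t₀ ht₀T
  have hst0 : s₀ ^ m * t₀ ^ n ≠ 0 := mul_ne_zero (pow_ne_zero _ hs₀0) (pow_ne_zero _ ht₀0)
  have hsp : Ideal.span {s₀ ^ m * t₀ ^ n} = Ideal.span {s₀} ^ m * Ideal.span {t₀} ^ n := by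
    rw [Ideal.span_singleton_pow, Ideal.span_singleton_pow, Ideal.span_singleton_mul_span_singleton]
  have hspan_ne : Ideal.span {s₀ ^ m * t₀ ^ n} ≠ ⊥ := by
    simpa [Ideal.span_singleton_eq_bot] using hst0
  have hcount : ∀ (I J : Ideal R), I ≠ ⊥ → J ≠ ⊥ →
      v (I ^ m * J ^ n) = m * v I + n * v J := by
    intro I J hI hJ
    rw [hv]
    simp only
    rw [normalizedFactors_mul (pow_ne_zero _ hI) (pow_ne_zero _ hJ),
      normalizedFactors_pow, normalizedFactors_pow, Multiset.count_add,
      Multiset.count_nsmul, Multiset.count_nsmul]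
  have step1 : v N ≤ v (Ideal.span {s₀ ^ m * t₀ ^ n}) :=
    count_le_of_ideal_ge ((Ideal.span_singleton_le_iff_mem _).mpr hmem) hspan_ne P
  have step2 : v (Ideal.span {s₀ ^ m * t₀ ^ n})
      = m * v (Ideal.span {s₀}) + n * v (Ideal.span {t₀}) := by
    rw [hsp]
    exact hcount _ _ (by simpa [Ideal.span_singleton_eq_bot] using hs₀0)
      (by simpa [Ideal.span_singleton_eq_bot] using ht₀0)
  have target : Multiset.count P (normalizedFactors (Ideal.span S ^ m * Ideal.span T ^ n))
      = m * v (Ideal.span S) + n * v (Ideal.span T) := hcount _ _ hS hT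
  rw [target]
  calc Multiset.count P (normalizedFactors N) = v N := rfl
    _ ≤ m * v (Ideal.span {s₀}) + n * v (Ideal.span {t₀}) := by rw [← step2]; exact step1
    _ ≤ m * v (Ideal.span S) + n * v (Ideal.span T) :=
        Nat.add_le_add (Nat.mul_le_mul_left _ hs₀) (Nat.mul_le_mul_left _ ht₀)

lemma relDiscIdeal_ne_bot (k : Type*) [Field k] [NumberField k] (K : Type*) [Field K]
    [Algebra k K] [FiniteDimensional k K] : relDiscIdeal k K ≠ ⊥ := by
  classical
  haveI : NumberField K := NumberField.of_module_finite k K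
  haveI : Algebra.IsAlgebraic ℚ K := Algebra.IsAlgebraic.of_finite ℚ K
  set B := Module.finBasis k K with hB
  have halg : ∀ i, IsAlgebraic ℤ (B i) := fun i =>
    (IsFractionRing.isAlgebraic_iff ℤ ℚ K).mpr (Algebra.IsAlgebraic.isAlgebraic (B i))
  have hinj : ∀ z : ℤ, algebraMap ℤ K z = 0 → z = 0 := fun z hz =>
    (algebraMap ℤ K).injective_int (by simpa using hz)
  choose x y hy hxy using fun i => (by
    obtain ⟨y, hy, hi⟩ := (halg i).exists_integral_multiple
    exact ⟨⟨_, hi⟩, y, hy, (Algebra.smul_def y (B i)).symm⟩ :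
    ∃ x : integralClosure ℤ K, ∃ y ≠ (0 : ℤ), algebraMap ℤ K y * B i = x)
  have hunit : ∀ i, IsUnit (algebraMap ℤ k (y i)) := fun i =>
    (isUnit_iff_ne_zero).mpr (by
      simpa using (algebraMap ℤ k).injective_int.ne (hy i))
  set B' := B.isUnitSMul hunit with hB'
  have hint : ∀ i, IsIntegral ℤ (B' i) := by
    intro i
    have : B' i = algebraMap ℤ K (y i) * B i := by
      rw [hB', Module.Basis.isUnitSMul_apply, Algebra.smul_def, IsScalarTower.algebraMap_apply ℤ k K]
    rw [this, hxy i]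
    exact (x i).2
  set F : Fin (Module.finrank k K) → 𝓞 K := fun i => ⟨B' i, hint i⟩ with hF
  have hd : IsIntegral ℤ (Algebra.discr k fun i => ((F i : K))) :=
    Algebra.discr_isIntegral k (fun i => hint i)
  set d : 𝓞 k := ⟨Algebra.discr k fun i => ((F i : K)), hd⟩ with hdd
  have hmem : d ∈ relDiscIdeal k K := Ideal.subset_span ⟨F, rfl⟩
  have hd0 : d ≠ 0 := by
    intro h0
    have : Algebra.discr k (fun i => ((F i : K))) = 0 := by
      have := congrArg (algebraMap (𝓞 k) k) h0
      exact this.trans (map_zero _)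
    have hfb : (fun i => ((F i : K))) = ⇑B' := rfl
    rw [hfb] at this
    exact Algebra.discr_not_zero_of_basis k B' this
  intro hbot
  rw [hbot] at hmem
  exact hd0 (by simpa using hmem)

set_option maxHeartbeats 2000000

/-- If `[KL:k] = [K:k]·[L:k]`, then `Disc(KL) ≤ Disc(K)^m · Disc(L)^n` where `n = [K:k]`
and `m = [L:k]`. -/
theorem disc_compositum_le (k : Type*) [Field k] [NumberField k]
    (k' : Type*) [Field k'] [Algebra k k'] [IsAlgClosure k k']
    (K L : IntermediateField k k') [FiniteDimensional k ↥K] [FiniteDimensional k ↥L]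
    (h : Module.finrank k ↥(K ⊔ L) = Module.finrank k ↥K * Module.finrank k ↥L) :
    Disc k ↥(K ⊔ L) ≤
      Disc k ↥K ^ Module.finrank k ↥L * Disc k ↥L ^ Module.finrank k ↥K := by
  classical
  haveI : FiniteDimensional k ↥(K ⊔ L) := IntermediateField.finiteDimensional_sup K L
  set n := Module.finrank k ↥K with hn
  set m := Module.finrank k ↥L with hm
  -- the compositum is isomorphic to the tensor product
  have hld : K.LinearDisjoint L := IntermediateField.LinearDisjoint.of_finrank_sup h
  have hld' : K.toSubalgebra.LinearDisjoint L.toSubalgebra :=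
    IntermediateField.linearDisjoint_iff'.mp hld
  obtain ⟨E, hEval⟩ : ∃ E : (↥K ⊗[k] ↥L) ≃ₐ[k] ↥(K ⊔ L),
      ∀ (x : ↥K) (y : ↥L), ((E (x ⊗ₜ[k] y) : ↥(K ⊔ L)) : k') = (x : k') * (y : k') :=
    ⟨hld'.mulMap.trans (Subalgebra.equivOfEq _ _
      (IntermediateField.sup_toSubalgebra_of_left K L).symm), fun x y => rfl⟩
  -- membership of the products of generators
  have Hmem : ∀ d ∈ {d : 𝓞 k | ∃ b : Fin (Module.finrank k ↥K) → 𝓞 ↥K,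
        algebraMap (𝓞 k) k d = Algebra.discr k (fun i => (b i : ↥K))},
      ∀ e ∈ {d : 𝓞 k | ∃ b : Fin (Module.finrank k ↥L) → 𝓞 ↥L,
        algebraMap (𝓞 k) k d = Algebra.discr k (fun i => (b i : ↥L))},
      d ^ m * e ^ n ∈ relDiscIdeal k ↥(K ⊔ L) := by
    rintro d ⟨b, hb⟩ e ⟨c, hc⟩
    set G : Fin n × Fin m → ↥(K ⊔ L) :=
      fun p => E (((b p.1 : ↥K)) ⊗ₜ[k] ((c p.2 : ↥L))) with hG
    have hGint : ∀ p, IsIntegral ℤ (G p) := by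
      intro p
      rw [← isIntegral_algebraMap_iff (algebraMap ↥(K ⊔ L) k').injective]
      show IsIntegral ℤ ((G p : ↥(K ⊔ L)) : k')
      rw [hG, hEval]
      exact IsIntegral.mul
        ((NumberField.RingOfIntegers.isIntegral_coe (b p.1)).algebraMap)
        ((NumberField.RingOfIntegers.isIntegral_coe (c p.2)).algebraMap)
    let q : Fin (Module.finrank k ↥(K ⊔ L)) ≃ Fin n × Fin m :=
      (finCongr h).trans finProdFinEquiv.symm
    set F : Fin (Module.finrank k ↥(K ⊔ L)) → 𝓞 ↥(K ⊔ L) :=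
      fun i => ⟨G (q i), hGint (q i)⟩ with hFdef
    refine Ideal.subset_span ⟨F, ?_⟩
    have h1 : (fun i => ((F i : ↥(K ⊔ L)))) = G ∘ q := rfl
    rw [h1, discr_comp_equiv, hG]
    have h2 : Algebra.discr k (fun p : Fin n × Fin m =>
          E (((b p.1 : ↥K)) ⊗ₜ[k] ((c p.2 : ↥L)))) =
        Algebra.discr k (fun i => ((b i : ↥K))) ^ Fintype.card (Fin m) *
          Algebra.discr k (fun j => ((c j : ↥L))) ^ Fintype.card (Fin n) :=
      discr_tensor k ↥K ↥L ↥(K ⊔ L) E (fun i => ((b i : ↥K))) (fun j => ((c j : ↥L)))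
    rw [h2, ← hb, ← hc]
    simp [Fintype.card_fin]
  have hKne : relDiscIdeal k ↥K ≠ ⊥ := relDiscIdeal_ne_bot k ↥K
  have hLne : relDiscIdeal k ↥L ≠ ⊥ := relDiscIdeal_ne_bot k ↥L
  have hNne : relDiscIdeal k ↥(K ⊔ L) ≠ ⊥ := relDiscIdeal_ne_bot k ↥(K ⊔ L)
  have hle : relDiscIdeal k ↥K ^ m * relDiscIdeal k ↥L ^ n ≤ relDiscIdeal k ↥(K ⊔ L) :=
    key_dedekind hKne hLne hNne Hmem
  have hdvd : Disc k ↥(K ⊔ L) ∣ Disc k ↥K ^ m * Disc k ↥L ^ n := by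
    have := Ideal.absNorm_dvd_absNorm_of_le hle
    simpa [Disc, map_mul, map_pow] using this
  refine Nat.le_of_dvd ?_ hdvd
  have h1 : Disc k ↥K ≠ 0 := by
    simpa [Disc, Ideal.absNorm_eq_zero_iff] using hKne
  have h2 : Disc k ↥L ≠ 0 := by
    simpa [Disc, Ideal.absNorm_eq_zero_iff] using hLne
  positivity
end

section
/- Let σ be a permutation of a finite set A and τ a permutation of a finite set B, and let σ×τ denote the permutation of A×B sending (a,b) to (σ(a),τ(b)). Then the number of orbits of σ×τ on A×B equals the sum, over all pairs (O,O') where O is an orbit of σ on A and O' is an orbit of τ on B, of gcd(|O|,|O'|). Equivalently, ind(σ×τ) = |A|·|B| − Σ_{(O,O')} gcd(|O|,|O'|). -/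
/-- The setoid on `α` whose classes are the orbits (cycles) of the permutation `σ`. -/
def sameCycleSetoid {α : Type*} (σ : Equiv.Perm α) : Setoid α :=
  ⟨σ.SameCycle, ⟨fun _ => Equiv.Perm.SameCycle.refl σ _, fun h => h.symm, fun h1 h2 => h1.trans h2⟩⟩

/-- The number of orbits of a permutation `σ` on `α`. -/
noncomputable def numOrbits {α : Type*} (σ : Equiv.Perm α) : ℕ :=
  Nat.card (Quotient (sameCycleSetoid σ))

/-- The index `ind(σ) = |α| - #orbits(σ)` of a permutation of a finite set. -/
noncomputable def permIndex {α : Type*} [Fintype α] (σ : Equiv.Perm α) : ℕ :=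
  Fintype.card α - numOrbits σ

namespace PermOrbitsAux

open Function MulAction Subgroup Equiv

variable {α β : Type*}

/-- `Equiv.prodCongr` on permutations, as a monoid hom. -/
def prodCongrHom (α β : Type*) : Equiv.Perm α × Equiv.Perm β →* Equiv.Perm (α × β) where
  toFun p := p.1.prodCongr p.2
  map_one' := Equiv.ext fun _ => rfl
  map_mul' _ _ := Equiv.ext fun _ => rfl

lemma zpow_prodCongr (σ : Equiv.Perm α) (τ : Equiv.Perm β) (k : ℤ) (x : α × β) :
    ((σ.prodCongr τ) ^ k) x = ((σ ^ k) x.1, (τ ^ k) x.2) := by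
  have h : σ.prodCongr τ = prodCongrHom α β (σ, τ) := rfl
  rw [h, ← map_zpow]
  rfl

lemma sameCycle_prodCongr_iff {σ : Equiv.Perm α} {τ : Equiv.Perm β} {p q : α × β} :
    Equiv.Perm.SameCycle (σ.prodCongr τ) p q ↔ ∃ k : ℤ, (σ ^ k) p.1 = q.1 ∧ (τ ^ k) p.2 = q.2 := by
  unfold Equiv.Perm.SameCycle
  constructor
  · rintro ⟨k, hk⟩
    rw [zpow_prodCongr] at hk
    exact ⟨k, congrArg Prod.fst hk, congrArg Prod.snd hk⟩
  · rintro ⟨k, h1, h2⟩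
    exact ⟨k, by rw [zpow_prodCongr]; exact Prod.ext h1 h2⟩

lemma mem_orbit_zpowers_iff {σ : Equiv.Perm α} {a x : α} :
    x ∈ MulAction.orbit (Subgroup.zpowers σ) a ↔ ∃ i : ℤ, (σ ^ i) a = x := by
  constructor
  · rintro ⟨⟨g, hg⟩, rfl⟩
    obtain ⟨i, rfl⟩ := Subgroup.mem_zpowers_iff.mp hg
    exact ⟨i, rfl⟩
  · rintro ⟨i, rfl⟩
    exact ⟨⟨σ ^ i, Subgroup.mem_zpowers_iff.mpr ⟨i, rfl⟩⟩, rfl⟩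

/-- The cardinality of the orbit (same-cycle class) of `a` is the minimal period of `a`. -/
lemma card_class [Finite α] (σ : Equiv.Perm α) (a : α) :
    Nat.card {x // Quotient.mk (sameCycleSetoid σ) x = Quotient.mk (sameCycleSetoid σ) a} =
      Function.minimalPeriod (σ • ·) a := by
  have e : {x // Quotient.mk (sameCycleSetoid σ) x = Quotient.mk (sameCycleSetoid σ) a} ≃
      MulAction.orbit (Subgroup.zpowers σ) a := by
    refine Equiv.subtypeEquivRight fun x => ?_
    rw [Quotient.eq, mem_orbit_zpowers_iff]
    show σ.SameCycle x a ↔ _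
    constructor
    · rintro ⟨i, hi⟩; exact ⟨-i, by simp [← hi]⟩
    · rintro ⟨i, rfl⟩; exact ⟨-i, by simp⟩
  rw [Nat.card_congr e]
  letI := Fintype.ofFinite (MulAction.orbit (Subgroup.zpowers σ) a)
  rw [Nat.card_eq_fintype_card, ← MulAction.minimalPeriod_eq_card]

lemma minimalPeriod_pos' [Finite α] (σ : Equiv.Perm α) (a : α) :
    0 < Function.minimalPeriod (σ • ·) a := by
  have : NeZero (Function.minimalPeriod (σ • ·) a) := MulAction.minimalPeriod_pos σ a
  exact Nat.pos_of_ne_zero this.out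

lemma zpow_apply_eq_iff (g : Equiv.Perm α) (x : α) (u v : ℤ) :
    (g ^ u) x = (g ^ v) x ↔ ((Function.minimalPeriod (g • ·) x : ℤ)) ∣ (u - v) := by
  have key : ∀ w : ℤ, (g ^ (v + w)) x = (g ^ v) ((g ^ w) x) := fun w => by
    rw [zpow_add, Equiv.Perm.mul_apply]
  constructor
  · intro h
    have h2 : (g ^ (v + (u - v))) x = (g ^ v) x := by
      rw [show v + (u - v) = u by ring]; exact h
    rw [key, Equiv.apply_eq_iff_eq] at h2
    exact MulAction.zpow_smul_eq_iff_minimalPeriod_dvd.mp h2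
  · intro h
    have h2 : (g ^ (u - v)) x = x := MulAction.zpow_smul_eq_iff_minimalPeriod_dvd.mpr h
    have h3 := congrArg (g ^ v) h2
    rw [← key, show v + (u - v) = u by ring] at h3
    exact h3

lemma key_int (m n : ℕ) (t t' : ℤ) :
    (∃ k : ℤ, (m : ℤ) ∣ k ∧ (n : ℤ) ∣ (k + t - t')) ↔ (Nat.gcd m n : ℤ) ∣ t' - t := by
  constructor
  · rintro ⟨k, ⟨u, rfl⟩, v, hv⟩
    have h1 : (Nat.gcd m n : ℤ) ∣ (m : ℤ) := Int.natCast_dvd_natCast.mpr (Nat.gcd_dvd_left m n)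
    have h2 : (Nat.gcd m n : ℤ) ∣ (n : ℤ) := Int.natCast_dvd_natCast.mpr (Nat.gcd_dvd_right m n)
    have : t' - t = (m : ℤ) * u - (n : ℤ) * v := by linarith
    rw [this]
    exact dvd_sub (h1.mul_right u) (h2.mul_right v)
  · rintro ⟨c, hc⟩
    refine ⟨(m : ℤ) * (Nat.gcdA m n * c), dvd_mul_right _ _, -(Nat.gcdB m n * c), ?_⟩
    have hb : (Nat.gcd m n : ℤ) = m * Nat.gcdA m n + n * Nat.gcdB m n := Nat.gcd_eq_gcd_ab m n
    have : t' - t = ((m : ℤ) * Nat.gcdA m n + n * Nat.gcdB m n) * c := by rw [← hb]; exact hc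
    linarith [this]

/-- The map sending an orbit of `σ×τ` to the corresponding pair of orbits of `σ` and `τ`. -/
def Fmap (σ : Equiv.Perm α) (τ : Equiv.Perm β) :
    Quotient (sameCycleSetoid (σ.prodCongr τ)) →
      Quotient (sameCycleSetoid σ) × Quotient (sameCycleSetoid τ) :=
  Quotient.lift
    (fun p => (Quotient.mk (sameCycleSetoid σ) p.1, Quotient.mk (sameCycleSetoid τ) p.2))
    (by
      rintro p q h
      obtain ⟨k, h1, h2⟩ := sameCycle_prodCongr_iff.mp h
      exact Prod.ext (Quotient.sound ⟨k, h1⟩) (Quotient.sound ⟨k, h2⟩))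

lemma card_fiber [Finite α] [Finite β] (σ : Equiv.Perm α) (τ : Equiv.Perm β) (a : α) (b : β) :
    Nat.card {q : Quotient (sameCycleSetoid (σ.prodCongr τ)) //
        Fmap σ τ q = (Quotient.mk (sameCycleSetoid σ) a, Quotient.mk (sameCycleSetoid τ) b)} =
      Nat.gcd (Function.minimalPeriod (σ • ·) a) (Function.minimalPeriod (τ • ·) b) := by
  set m := Function.minimalPeriod (σ • ·) a with hm_def
  set n := Function.minimalPeriod (τ • ·) b with hn_def
  set d := Nat.gcd m n with hd_def
  have hm : 0 < m := minimalPeriod_pos' σ a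
  have hn : 0 < n := minimalPeriod_pos' τ b
  have hd : 0 < d := Nat.gcd_pos_of_pos_left n hm
  haveI : NeZero d := ⟨hd.ne'⟩
  set Fib := {q : Quotient (sameCycleSetoid (σ.prodCongr τ)) //
      Fmap σ τ q = (Quotient.mk (sameCycleSetoid σ) a, Quotient.mk (sameCycleSetoid τ) b)}
    with hFib
  -- the basic family of points
  have hmem : ∀ t : ℤ,
      Fmap σ τ (Quotient.mk (sameCycleSetoid (σ.prodCongr τ)) (a, (τ ^ t) b)) =
        (Quotient.mk (sameCycleSetoid σ) a, Quotient.mk (sameCycleSetoid τ) b) := by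
    intro t
    show (Quotient.mk (sameCycleSetoid σ) a, Quotient.mk (sameCycleSetoid τ) ((τ ^ t) b)) = _
    refine Prod.ext rfl (Quotient.sound ?_)
    exact ⟨-t, by simp⟩
  let g : ℤ → Fib := fun t => ⟨Quotient.mk _ (a, (τ ^ t) b), hmem t⟩
  have hg_eq : ∀ t t' : ℤ, g t = g t' ↔ (d : ℤ) ∣ t' - t := by
    intro t t'
    rw [Subtype.ext_iff]
    show Quotient.mk _ (a, (τ ^ t) b) = Quotient.mk _ (a, (τ ^ t') b) ↔ _
    rw [Quotient.eq]
    show Equiv.Perm.SameCycle (σ.prodCongr τ) _ _ ↔ _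
    rw [sameCycle_prodCongr_iff]
    rw [← key_int m n t t']
    apply exists_congr
    intro k
    constructor
    · rintro ⟨h1, h2⟩
      refine ⟨MulAction.zpow_smul_eq_iff_minimalPeriod_dvd.mp h1, ?_⟩
      have : (τ ^ (k + t)) b = (τ ^ t') b := by
        rw [zpow_add, Equiv.Perm.mul_apply]; exact h2
      have := (zpow_apply_eq_iff τ b (k + t) t').mp this
      rwa [show k + t - t' = k + t - t' by ring] at this
    · rintro ⟨h1, h2⟩
      refine ⟨MulAction.zpow_smul_eq_iff_minimalPeriod_dvd.mpr h1, ?_⟩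
      have : (τ ^ (k + t)) b = (τ ^ t') b := (zpow_apply_eq_iff τ b (k + t) t').mpr h2
      rw [zpow_add, Equiv.Perm.mul_apply] at this
      exact this
  -- the candidate bijection
  have hbij : Function.Bijective (fun z : ZMod d => g (z.val : ℤ)) := by
    constructor
    · intro z w h
      have hdvd : (d : ℤ) ∣ (w.val : ℤ) - (z.val : ℤ) := (hg_eq _ _).mp h
      have : ((z.val : ℤ) : ZMod d) = ((w.val : ℤ) : ZMod d) := by
        rw [ZMod.intCast_eq_intCast_iff]
        exact (Int.modEq_iff_dvd.mpr hdvd)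
      rwa [Int.cast_natCast, Int.cast_natCast, ZMod.natCast_rightInverse z,
        ZMod.natCast_rightInverse w] at this
    · rintro ⟨q, hq⟩
      obtain ⟨⟨x, y⟩, rfl⟩ := Quotient.exists_rep q
      have hq' : (Quotient.mk (sameCycleSetoid σ) x, Quotient.mk (sameCycleSetoid τ) y) =
          (Quotient.mk (sameCycleSetoid σ) a, Quotient.mk (sameCycleSetoid τ) b) := hq
      have hx : σ.SameCycle a x := (Quotient.exact (congrArg Prod.fst hq')).symm
      have hy : τ.SameCycle b y := (Quotient.exact (congrArg Prod.snd hq')).symm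
      obtain ⟨i, hi⟩ := hx
      obtain ⟨j, hj⟩ := hy
      -- the class of (x, y) is g (j - i)
      have hgji : g (j - i) = ⟨Quotient.mk _ (x, y), hq⟩ := by
        refine Subtype.ext (Quotient.sound ?_)
        refine ⟨i, ?_⟩
        rw [zpow_prodCongr]
        refine Prod.ext (by simpa using hi) ?_
        show (τ ^ i) ((τ ^ (j - i)) b) = y
        rw [← Equiv.Perm.mul_apply, ← zpow_add, show i + (j - i) = j by ring]
        exact hj
      refine ⟨((j - i : ℤ) : ZMod d), ?_⟩
      rw [← hgji]
      apply (hg_eq _ _).mpr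
      have : ((((j - i : ℤ) : ZMod d).val : ℤ) : ZMod d) = ((j - i : ℤ) : ZMod d) := by
        rw [Int.cast_natCast, ZMod.natCast_rightInverse]
      have := (ZMod.intCast_eq_intCast_iff _ _ _).mp this
      exact this.dvd
  rw [Nat.card_congr (Equiv.ofBijective _ hbij).symm, Nat.card_zmod]

end PermOrbitsAux

/-- The number of orbits of `σ×τ` on `A×B` is the sum over pairs of orbits `(O,O')` of
`gcd(|O|,|O'|)`; equivalently `ind(σ×τ) = |A|·|B| − Σ gcd(|O|,|O'|)`. -/
theorem numOrbits_prodCongr_eq_sum_gcd {α β : Type*} [Fintype α] [Fintype β]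
    (σ : Equiv.Perm α) (τ : Equiv.Perm β) :
    numOrbits (σ.prodCongr τ) =
      (∑ᶠ (O : Quotient (sameCycleSetoid σ)) (O' : Quotient (sameCycleSetoid τ)),
        Nat.gcd (Nat.card {a // Quotient.mk (sameCycleSetoid σ) a = O})
          (Nat.card {b // Quotient.mk (sameCycleSetoid τ) b = O'})) ∧
    permIndex (σ.prodCongr τ) =
      Fintype.card α * Fintype.card β -
      (∑ᶠ (O : Quotient (sameCycleSetoid σ)) (O' : Quotient (sameCycleSetoid τ)),
        Nat.gcd (Nat.card {a // Quotient.mk (sameCycleSetoid σ) a = O})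
          (Nat.card {b // Quotient.mk (sameCycleSetoid τ) b = O'})) := by
  classical
  letI : Fintype (Quotient (sameCycleSetoid σ)) := Fintype.ofFinite _
  letI : Fintype (Quotient (sameCycleSetoid τ)) := Fintype.ofFinite _
  letI : Fintype (Quotient (sameCycleSetoid (σ.prodCongr τ))) := Fintype.ofFinite _
  have hmain : numOrbits (σ.prodCongr τ) =
      (∑ᶠ (O : Quotient (sameCycleSetoid σ)) (O' : Quotient (sameCycleSetoid τ)),
        Nat.gcd (Nat.card {a // Quotient.mk (sameCycleSetoid σ) a = O})
          (Nat.card {b // Quotient.mk (sameCycleSetoid τ) b = O'})) := by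
    rw [finsum_eq_sum_of_fintype]
    simp only [finsum_eq_sum_of_fintype]
    unfold numOrbits
    rw [Nat.card_congr (Equiv.sigmaFiberEquiv (PermOrbitsAux.Fmap σ τ)).symm, Nat.card_eq_fintype_card, Fintype.card_sigma,
      Fintype.sum_prod_type]
    refine Finset.sum_congr rfl fun O _ => Finset.sum_congr rfl fun O' _ => ?_
    rw [← Nat.card_eq_fintype_card]
    induction O using Quotient.inductionOn with
    | h a =>
      induction O' using Quotient.inductionOn with
      | h b =>
        rw [PermOrbitsAux.card_fiber σ τ a b, PermOrbitsAux.card_class σ a,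
          PermOrbitsAux.card_class τ b]
  refine ⟨hmain, ?_⟩
  unfold permIndex
  rw [hmain, Fintype.card_prod]
end

section
/- Let n ≥ 2 be an integer and G a non-trivial finite group. Then the minimum of ind(σ,g) over all pairs (σ,g) ∈ S_n × G with (σ,g) ≠ (1,1) equals |G|. (In the notation of Malle's conjecture, a(S_n × G) = 1/|G| for this permutation representation.) -/
open Equiv

section Aux
variable {α β : Type*}

def prodCongrMH : Equiv.Perm α × Equiv.Perm β →* Equiv.Perm (α × β) where
  toFun p := p.1.prodCongr p.2
  map_one' := Equiv.ext fun _ => rfl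
  map_mul' _ _ := Equiv.ext fun _ => rfl

lemma prodCongr_zpow (σ : Equiv.Perm α) (τ : Equiv.Perm β) (k : ℤ) :
    (σ.prodCongr τ) ^ k = (σ ^ k).prodCongr (τ ^ k) := by
  have h := map_zpow prodCongrMH (σ, τ) k
  have h2 : (σ, τ) ^ k = (σ ^ k, τ ^ k) := rfl
  rw [h2] at h
  exact h.symm

lemma sameCycle_prodCongr {σ : Equiv.Perm α} {τ : Equiv.Perm β} {a b : α} {x y : β} :
    Equiv.Perm.SameCycle (σ.prodCongr τ) (a, x) (b, y) ↔ ∃ k : ℤ, (σ ^ k) a = b ∧ (τ ^ k) x = y := by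
  constructor
  · rintro ⟨k, hk⟩
    rw [prodCongr_zpow] at hk
    exact ⟨k, congrArg Prod.fst hk, congrArg Prod.snd hk⟩
  · rintro ⟨k, h1, h2⟩
    exact ⟨k, by rw [prodCongr_zpow]; exact Prod.ext h1 h2⟩

lemma mk_perm_apply (π : Equiv.Perm α) (z : α) :
    (Quotient.mk (sameCycleSetoid π) (π z)) = Quotient.mk (sameCycleSetoid π) z :=
  Quotient.sound ⟨-1, by simp⟩

noncomputable def quotProdOne (σ : Equiv.Perm α) :
    Quotient (sameCycleSetoid (σ.prodCongr (1 : Equiv.Perm β))) ≃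
      Quotient (sameCycleSetoid σ) × β where
  toFun := Quotient.lift (fun p => (Quotient.mk _ p.1, p.2)) (by
    rintro ⟨a, x⟩ ⟨b, y⟩ h
    obtain ⟨k, h1, h2⟩ := sameCycle_prodCongr.mp h
    simp only [one_zpow, Equiv.Perm.one_apply] at h2
    subst h2
    exact Prod.ext (Quotient.sound ⟨k, h1⟩) rfl)
  invFun p := Quotient.lift (fun a => Quotient.mk _ (a, p.2))
    (fun a b h => Quotient.sound (by
      obtain ⟨k, hk⟩ := h
      exact sameCycle_prodCongr.mpr ⟨k, hk, by simp⟩)) p.1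
  left_inv := by
    apply Quotient.ind
    rintro ⟨a, x⟩
    rfl
  right_inv := by
    rintro ⟨q, x⟩
    induction q using Quotient.ind
    rfl

lemma numOrbits_prodCongr_one (σ : Equiv.Perm α) :
    numOrbits (σ.prodCongr (1 : Equiv.Perm β)) = numOrbits σ * Nat.card β := by
  rw [numOrbits, Nat.card_congr (quotProdOne σ), Nat.card_prod, numOrbits]

end Aux

section Swap
variable {α : Type*} [DecidableEq α]

lemma swap_zpow (a b : α) (k : ℤ) :
    (swap a b) ^ k = 1 ∨ (swap a b) ^ k = swap a b := by
  have h2 : (swap a b) ^ (2 : ℤ) = 1 := by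
    rw [zpow_two, Equiv.swap_mul_self]
  rcases Int.even_or_odd k with ⟨m, hm⟩ | ⟨m, hm⟩
  · left; rw [hm, ← two_mul, zpow_mul, h2, one_zpow]
  · right; rw [hm, zpow_add, zpow_mul, h2, one_zpow, zpow_one, one_mul]

lemma sameCycle_swap_iff {a b x y : α} :
    Equiv.Perm.SameCycle (swap a b) x y ↔ y = x ∨ y = swap a b x := by
  constructor
  · rintro ⟨k, hk⟩
    rcases swap_zpow a b k with h | h <;> rw [h] at hk
    · left; exact hk.symm
    · right; exact hk.symm
  · rintro (rfl | rfl)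
    · exact ⟨0, rfl⟩
    · exact ⟨1, rfl⟩

noncomputable def quotSwap {a b : α} (hab : a ≠ b) :
    Quotient (sameCycleSetoid (swap a b)) ≃ {x : α // x ≠ b} where
  toFun := Quotient.lift (fun x => if h : x = b then ⟨a, hab⟩ else ⟨x, h⟩) (by
    intro x y h
    rcases sameCycle_swap_iff.mp h with rfl | rfl
    · rfl
    · by_cases hxa : x = a
      · subst hxa
        rw [Equiv.swap_apply_left]
        simp [hab]
      · by_cases hxb : x = b
        · subst hxb
          rw [Equiv.swap_apply_right]
          simp [hab, Ne.symm hab]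
        · rw [Equiv.swap_apply_of_ne_of_ne hxa hxb])
  invFun x := Quotient.mk _ x.1
  left_inv := by
    apply Quotient.ind
    intro x
    simp only [Quotient.lift_mk]
    by_cases h : x = b
    · subst h
      simp only [dif_pos]
      exact Quotient.sound (sameCycle_swap_iff.mpr (Or.inr (Equiv.swap_apply_left a x).symm))
    · simp only [dif_neg h]
  right_inv := by
    rintro ⟨x, h⟩
    simp only [Quotient.lift_mk, dif_neg h]

lemma numOrbits_swap {a b : α} (hab : a ≠ b) [Fintype α] :
    numOrbits (swap a b) = Fintype.card α - 1 := by
  rw [numOrbits, Nat.card_congr (quotSwap hab), Nat.card_eq_fintype_card]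
  rw [Fintype.card_subtype_compl, Fintype.card_subtype_eq]

end Swap

section Bounds
variable {α : Type*} [Fintype α]

lemma numOrbits_lt_card {σ : Equiv.Perm α} (hσ : σ ≠ 1) :
    numOrbits σ < Fintype.card α := by
  obtain ⟨a, ha⟩ : ∃ a, σ a ≠ a := by
    by_contra h
    push_neg at h
    exact hσ (Equiv.ext h)
  haveI : Fintype (Quotient (sameCycleSetoid σ)) := Fintype.ofFinite _
  rw [numOrbits, Nat.card_eq_fintype_card]
  refine Fintype.card_lt_of_surjective_not_injective (Quotient.mk _)
    (fun q => q.exists_rep) (fun hinj => ha ?_)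
  exact hinj (mk_perm_apply σ a)

lemma two_mul_numOrbits_le {π : Equiv.Perm α} (h : ∀ x, π x ≠ x) :
    2 * numOrbits π ≤ Fintype.card α := by
  have hinj : Function.Injective
      (fun p : Quotient (sameCycleSetoid π) × Bool => if p.2 then π p.1.out else p.1.out) := by
    rintro ⟨q, b⟩ ⟨q', b'⟩ heq
    simp only at heq
    have key : ∀ q : Quotient (sameCycleSetoid π), Quotient.mk _ (π q.out) = q := fun q => by
      rw [mk_perm_apply, Quotient.out_eq]
    match b, b' with
    | false, false => simp only [if_neg Bool.false_ne_true] at heq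
                      exact Prod.ext (by rw [← Quotient.out_eq q, ← Quotient.out_eq q', heq]) rfl
    | true, true => simp only [if_pos] at heq
                    exact Prod.ext (by rw [← key q, ← key q', heq]) rfl
    | false, true => exfalso
                     simp only [if_neg Bool.false_ne_true, if_pos] at heq
                     have : q = q' := by rw [← Quotient.out_eq q, heq, key]
                     subst this
                     exact h q.out heq.symm
    | true, false => exfalso
                     simp only [if_neg Bool.false_ne_true, if_pos] at heq
                     have : q = q' := by rw [← key q, heq, Quotient.out_eq]
                     subst this
                     exact h q.out heq
  have := Nat.card_le_card_of_injective _ hinj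
  rw [Nat.card_prod, Nat.card_eq_fintype_card (α := α), Nat.card_eq_fintype_card (α := Bool),
    Fintype.card_bool] at this
  simp only [numOrbits]
  omega

end Bounds

/-- For `n ≥ 2` and a non-trivial finite group `G`, the minimum of `ind(σ,g)` over pairs
`(σ,g) ≠ (1,1)` in `Sₙ × G` (acting on `{1,…,n} × G`) equals `|G|`. -/
theorem isLeast_index_prod (n : ℕ) (hn : 2 ≤ n)
    (G : Type*) [Group G] [Fintype G] [Nontrivial G] :
    IsLeast {N : ℕ | ∃ (σ : Equiv.Perm (Fin n)) (g : G), (σ, g) ≠ (1, 1) ∧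
      N = permIndex (σ.prodCongr (Equiv.mulLeft g))} (Fintype.card G) := by
  constructor
  · have h01 : (⟨0, by omega⟩ : Fin n) ≠ ⟨1, by omega⟩ := by simp [Fin.ext_iff]
    refine ⟨swap ⟨0, by omega⟩ ⟨1, by omega⟩, 1, ?_, ?_⟩
    · intro h
      have h1 := congrArg Prod.fst h
      simp only at h1
      have := congrArg (fun e => e (⟨0, by omega⟩ : Fin n)) h1
      simp only [Equiv.swap_apply_left, Equiv.Perm.one_apply] at this
      exact h01 this.symm
    · rw [Equiv.mulLeft_one, permIndex, numOrbits_prodCongr_one, numOrbits_swap h01,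
        Fintype.card_prod, Fintype.card_fin, Nat.card_eq_fintype_card, ← Nat.sub_mul]
      have h : n - (n - 1) = 1 := by omega
      rw [h, one_mul]
  · rintro N ⟨σ, g, hne, rfl⟩
    by_cases hg : g = 1
    · subst hg
      have hσ : σ ≠ 1 := fun h => hne (by rw [h])
      rw [Equiv.mulLeft_one, permIndex, numOrbits_prodCongr_one, Fintype.card_prod,
        Fintype.card_fin, Nat.card_eq_fintype_card]
      have h1 : numOrbits σ < Fintype.card (Fin n) := numOrbits_lt_card hσ
      rw [Fintype.card_fin] at h1
      have h2 : (numOrbits σ + 1) * Fintype.card G ≤ n * Fintype.card G :=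
        Nat.mul_le_mul_right _ h1
      have h3 : 0 < Fintype.card G := Fintype.card_pos
      rw [add_mul, one_mul] at h2
      set A := numOrbits σ * Fintype.card G
      set B := n * Fintype.card G
      omega
    · have hfix : ∀ x : Fin n × G, (σ.prodCongr (Equiv.mulLeft g)) x ≠ x := by
        rintro ⟨i, x⟩ h
        have h2 := congrArg Prod.snd h
        simp only [Equiv.prodCongr_apply, Prod.map, Equiv.coe_mulLeft] at h2
        exact hg (mul_eq_right.mp h2)
      have h2 := two_mul_numOrbits_le hfix
      rw [Fintype.card_prod, Fintype.card_fin] at h2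
      rw [permIndex, Fintype.card_prod, Fintype.card_fin]
      have h3 : 2 * Fintype.card G ≤ n * Fintype.card G := Nat.mul_le_mul_right _ hn
      set M := numOrbits (σ.prodCongr (Equiv.mulLeft g))
      set B := n * Fintype.card G
      omega
end

section
/- Let G be a finite nilpotent group of odd order. Then for every g ∈ G with g ≠ 1, ind((12),g) > 2·|G|, where (12) ∈ S₃ is a transposition; and for every g ∈ G (including g = 1), ind((123),g) > |G|, where (123) ∈ S₃ is a 3-cycle. -/
/-- Every point is in the same cycle as its images under powers of `σ`. -/
lemma sc_pow {α : Type*} (σ : Equiv.Perm α) (x : α) (n : ℕ) :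
    σ.SameCycle x ((σ ^ n) x) := ⟨(n : ℤ), by simp [zpow_natCast]⟩

lemma mk_eq_of_sc {α : Type*} {σ : Equiv.Perm α} {x y : α} (h : σ.SameCycle x y) :
    Quotient.mk (sameCycleSetoid σ) y = Quotient.mk (sameCycleSetoid σ) x :=
  (Quotient.sound (h : (sameCycleSetoid σ).r x y)).symm

/-- If `x, σ x, σ² x, σ³ x` are pairwise distinct, the orbit of `x` has more than 3 elements. -/
lemma fiber_four_le {α : Type*} [Fintype α] (σ : Equiv.Perm α) (x : α)
    (h1 : x ≠ σ x) (h2 : x ≠ σ (σ x)) (h12 : σ x ≠ σ (σ x))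
    (h13 : x ≠ σ (σ (σ x))) (h23 : σ x ≠ σ (σ (σ x))) (h33 : σ (σ x) ≠ σ (σ (σ x)))
    [Fintype {a : α // Quotient.mk (sameCycleSetoid σ) a = Quotient.mk (sameCycleSetoid σ) x}] :
    3 < Fintype.card {a : α // Quotient.mk (sameCycleSetoid σ) a = Quotient.mk (sameCycleSetoid σ) x} := by
  classical
  have hy : Quotient.mk (sameCycleSetoid σ) (σ x) = Quotient.mk (sameCycleSetoid σ) x :=
    mk_eq_of_sc (by simpa using sc_pow σ x 1)
  have hz : Quotient.mk (sameCycleSetoid σ) (σ (σ x)) = Quotient.mk (sameCycleSetoid σ) x :=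
    mk_eq_of_sc (by simpa [pow_succ, Equiv.Perm.mul_apply] using sc_pow σ x 2)
  have hw : Quotient.mk (sameCycleSetoid σ) (σ (σ (σ x))) = Quotient.mk (sameCycleSetoid σ) x :=
    mk_eq_of_sc (by simpa [pow_succ, Equiv.Perm.mul_apply] using sc_pow σ x 3)
  have hinj : Function.Injective
      (![⟨x, rfl⟩, ⟨σ x, hy⟩, ⟨σ (σ x), hz⟩, ⟨σ (σ (σ x)), hw⟩] :
        Fin 4 → {a : α // Quotient.mk (sameCycleSetoid σ) a = Quotient.mk (sameCycleSetoid σ) x}) := by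
    intro i j hij
    fin_cases i <;> fin_cases j <;> simp_all [Subtype.ext_iff]
  have h4 := Fintype.card_le_of_injective _ hinj
  simp only [Fintype.card_fin] at h4
  show 4 ≤ _
  convert h4

/-- If every orbit of `σ` has at least 3 elements, then `3 · #orbits ≤ |α|`. -/
lemma three_mul_orbits_le {α : Type*} [Fintype α] (σ : Equiv.Perm α)
    (h3 : ∀ x : α, x ≠ σ x ∧ x ≠ σ (σ x) ∧ σ x ≠ σ (σ x)) :
    3 * numOrbits σ ≤ Fintype.card α := by
  classical
  haveI : Fintype (Quotient (sameCycleSetoid σ)) := Fintype.ofFinite _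
  have hcard : Fintype.card α =
      ∑ q : Quotient (sameCycleSetoid σ),
        Fintype.card {a : α // Quotient.mk (sameCycleSetoid σ) a = q} := by
    rw [← Fintype.card_sigma]
    exact (Fintype.card_congr (Equiv.sigmaFiberEquiv _)).symm
  have hq : numOrbits σ = Fintype.card (Quotient (sameCycleSetoid σ)) :=
    Nat.card_eq_fintype_card
  rw [hcard, hq]
  calc 3 * Fintype.card (Quotient (sameCycleSetoid σ))
      = ∑ _q : Quotient (sameCycleSetoid σ), 3 := by
        simp [Finset.sum_const, mul_comm]
    _ ≤ _ := Finset.sum_le_sum (fun q _ => by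
        obtain ⟨x, rfl⟩ := q.exists_rep
        obtain ⟨h1, h2, h12⟩ := h3 x
        rw [show (3 : ℕ) = 2 + 1 by rfl, Nat.add_one_le_iff, Fintype.two_lt_card_iff]
        exact ⟨⟨x, rfl⟩, ⟨σ x, mk_eq_of_sc (by simpa using sc_pow σ x 1)⟩,
          ⟨σ (σ x), mk_eq_of_sc (by simpa [pow_succ, Equiv.Perm.mul_apply] using sc_pow σ x 2)⟩,
          by simp [Subtype.ext_iff, h1], by simp [Subtype.ext_iff, h2],
          by simp [Subtype.ext_iff, h12]⟩)

/-- If moreover some orbit has at least 4 elements, the inequality is strict. -/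
lemma three_mul_orbits_lt {α : Type*} [Fintype α] (σ : Equiv.Perm α)
    (h3 : ∀ x : α, x ≠ σ x ∧ x ≠ σ (σ x) ∧ σ x ≠ σ (σ x)) (x₀ : α)
    (h13 : x₀ ≠ σ (σ (σ x₀))) (h23 : σ x₀ ≠ σ (σ (σ x₀))) (h33 : σ (σ x₀) ≠ σ (σ (σ x₀))) :
    3 * numOrbits σ < Fintype.card α := by
  classical
  haveI : Fintype (Quotient (sameCycleSetoid σ)) := Fintype.ofFinite _
  have hcard : Fintype.card α =
      ∑ q : Quotient (sameCycleSetoid σ),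
        Fintype.card {a : α // Quotient.mk (sameCycleSetoid σ) a = q} := by
    rw [← Fintype.card_sigma]
    exact (Fintype.card_congr (Equiv.sigmaFiberEquiv _)).symm
  have hq : numOrbits σ = Fintype.card (Quotient (sameCycleSetoid σ)) :=
    Nat.card_eq_fintype_card
  rw [hcard, hq]
  have key : ∀ q : Quotient (sameCycleSetoid σ),
      3 ≤ Fintype.card {a : α // Quotient.mk (sameCycleSetoid σ) a = q} := by
    intro q
    obtain ⟨x, rfl⟩ := q.exists_rep
    obtain ⟨h1, h2, h12⟩ := h3 x
    rw [show (3 : ℕ) = 2 + 1 by rfl, Nat.add_one_le_iff, Fintype.two_lt_card_iff]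
    exact ⟨⟨x, rfl⟩, ⟨σ x, mk_eq_of_sc (by simpa using sc_pow σ x 1)⟩,
      ⟨σ (σ x), mk_eq_of_sc (by simpa [pow_succ, Equiv.Perm.mul_apply] using sc_pow σ x 2)⟩,
      by simp [Subtype.ext_iff, h1], by simp [Subtype.ext_iff, h2],
      by simp [Subtype.ext_iff, h12]⟩
  calc 3 * Fintype.card (Quotient (sameCycleSetoid σ))
      = ∑ _q : Quotient (sameCycleSetoid σ), 3 := by
        simp [Finset.sum_const, mul_comm]
    _ < _ := Finset.sum_lt_sum (fun q _ => key q)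
        ⟨Quotient.mk (sameCycleSetoid σ) x₀, Finset.mem_univ _, by
          obtain ⟨h1, h2, h12⟩ := h3 x₀
          exact fiber_four_le σ x₀ h1 h2 h12 h13 h23 h33⟩

lemma numOrbits_le_card {α : Type*} [Fintype α] (σ : Equiv.Perm α) :
    numOrbits σ ≤ Fintype.card α := by
  rw [numOrbits, ← Nat.card_eq_fintype_card]
  exact Nat.card_le_card_of_surjective _ Quotient.mk_surjective

section Helpers
variable {G : Type*} [Group G] (g : G)

lemma h3_swap (hg : g ≠ 1) (hg2 : g * g ≠ 1) (x : Fin 3 × G) :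
    letI σ := (Equiv.swap (0 : Fin 3) 1).prodCongr (Equiv.mulLeft g)
    x ≠ σ x ∧ x ≠ σ (σ x) ∧ σ x ≠ σ (σ x) := by
  obtain ⟨i, a⟩ := x
  have ha : g * a ≠ a := fun h => hg (by
    have := h.trans (one_mul a).symm; exact mul_right_cancel this)
  have ha2 : g * (g * a) ≠ a := fun h => hg2 (by
    have : (g * g) * a = 1 * a := by rw [mul_assoc, h, one_mul]
    exact mul_right_cancel this)
  fin_cases i <;> simp_all [Prod.ext_iff, Equiv.swap_apply_def, ne_comm]

lemma h4_swap (hg2 : g * g ≠ 1) :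
    letI σ := (Equiv.swap (0 : Fin 3) 1).prodCongr (Equiv.mulLeft g)
    letI x₀ : Fin 3 × G := (0, 1)
    x₀ ≠ σ (σ (σ x₀)) ∧ σ x₀ ≠ σ (σ (σ x₀)) ∧ σ (σ x₀) ≠ σ (σ (σ x₀)) := by
  have h4a : g ≠ g * (g * g) := fun h => hg2 (mul_left_cancel (a := g) (by rw [← h, mul_one]))
  refine ⟨?_, ?_, ?_⟩ <;> simp [Prod.ext_iff, Equiv.swap_apply_def, h4a]

lemma h3_cyc (x : Fin 3 × G) :
    letI σ := ((Equiv.swap (0 : Fin 3) 2 * Equiv.swap 0 1)).prodCongr (Equiv.mulLeft g)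
    x ≠ σ x ∧ x ≠ σ (σ x) ∧ σ x ≠ σ (σ x) := by
  obtain ⟨i, a⟩ := x
  refine ⟨fun h => ?_, fun h => ?_, fun h => ?_⟩ <;>
  · have h1 := congrArg Prod.fst h
    simp only [Equiv.prodCongr_apply, Prod.map, Equiv.Perm.mul_apply] at h1
    fin_cases i <;> simp [Equiv.swap_apply_def] at h1

end Helpers

/-- For a finite nilpotent group `G` of odd order: `ind((12),g) > 2|G|` for all `g ≠ 1`, and
`ind((123),g) > |G|` for all `g ∈ G`. -/
theorem index_S3_prod (G : Type*) [Group G] [Fintype G] [Group.IsNilpotent G]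
    (hodd : Odd (Fintype.card G)) :
    (∀ g : G, g ≠ 1 →
      2 * Fintype.card G <
        permIndex ((Equiv.swap (0 : Fin 3) 1).prodCongr (Equiv.mulLeft g))) ∧
    (∀ g : G,
      Fintype.card G <
        permIndex ((Equiv.swap (0 : Fin 3) 2 * Equiv.swap 0 1).prodCongr (Equiv.mulLeft g))) := by
  have hcardP : Fintype.card (Fin 3 × G) = 3 * Fintype.card G := by
    simp [Fintype.card_prod]
  have hGpos : 0 < Fintype.card G := Fintype.card_pos
  constructor
  · intro g hg
    have hg2 : g * g ≠ 1 := by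
      intro h
      have h2 : orderOf g ∣ 2 := orderOf_dvd_of_pow_eq_one (by rwa [pow_two])
      rcases (Nat.dvd_prime Nat.prime_two).1 h2 with h1 | h1
      · exact hg (orderOf_eq_one_iff.1 h1)
      · exact (Nat.not_even_iff_odd.2 hodd) (even_iff_two_dvd.2 (h1 ▸ orderOf_dvd_card))
    obtain ⟨h13, h23, h33⟩ := h4_swap g hg2
    have hlt : 3 * numOrbits ((Equiv.swap (0 : Fin 3) 1).prodCongr (Equiv.mulLeft g)) <
        Fintype.card (Fin 3 × G) :=
      three_mul_orbits_lt _ (h3_swap g hg hg2) ((0 : Fin 3), (1 : G)) h13 h23 h33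
    have hle := numOrbits_le_card ((Equiv.swap (0 : Fin 3) 1).prodCongr (Equiv.mulLeft g))
    rw [permIndex]
    omega
  · intro g
    have hle : 3 * numOrbits ((Equiv.swap (0 : Fin 3) 2 * Equiv.swap 0 1).prodCongr
        (Equiv.mulLeft g)) ≤ Fintype.card (Fin 3 × G) :=
      three_mul_orbits_le _ (h3_cyc g)
    have hle2 := numOrbits_le_card ((Equiv.swap (0 : Fin 3) 2 * Equiv.swap 0 1).prodCongr
        (Equiv.mulLeft g))
    rw [permIndex]
    omega
end

section
/- Let a, b be positive integers, α ∈ (0,1), and β > 0 with b − a·α > 0. Then there exists a constant C = C(a,b,α,β) > 0 with the following property: if n₁, n₂ : ℤ_{≥1} → ℕ are multiplicity functions with counting functions F_i(X) := Σ_{m ≤ X} n_i(m), and if there are constants C₁, C₂ > 0 such that F₁(X) ≤ C₁·X for all X ≥ 1, F₂(X) ≤ C₂·X^α·(log X)^β for all X ≥ 2, and F₂(1) ≤ C₂, then for all X ≥ 1, P_{a,b}(X) := Σ_{(r₁,r₂): r₁^a·r₂^b ≤ X} n₁(r₁)·n₂(r₂) ≤ C·C₁·C₂·X^{1/a}. 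-/
/-- The counting function `F(X) = Σ_{1 ≤ m ≤ X} n(m)` of a multiset of positive integers
encoded by its multiplicity function `f`. -/
noncomputable def countFn (f : ℕ → ℕ) (X : ℝ) : ℕ :=
  ∑ m ∈ Finset.Icc 1 ⌊X⌋₊, f m

open scoped Classical in
/-- The product counting function `P_{a,b}(X) = Σ_{r₁^a r₂^b ≤ X} n₁(r₁) n₂(r₂)`
(the sum over pairs of positive integers). -/
noncomputable def prodCount (a b : ℕ) (f g : ℕ → ℕ) (X : ℝ) : ℕ :=
  ∑ p ∈ (Finset.Icc 1 ⌊X⌋₊ ×ˢ Finset.Icc 1 ⌊X⌋₊).filter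
      (fun p => (p.1 : ℝ) ^ a * (p.2 : ℝ) ^ b ≤ X), f p.1 * g p.2

section Aux
open Real

lemma diff_rpow_le {x p : ℝ} (hx : 1 ≤ x) (hp : 0 < p) :
    x ^ (-p) - (x + 1) ^ (-p) ≤ p * x ^ (-(p + 1)) := by
  have hx0 : (0:ℝ) < x := by linarith
  have hx1 : (0:ℝ) < x + 1 := by linarith
  have ht0 : (0:ℝ) < x / (x + 1) := div_pos hx0 hx1
  set t : ℝ := x / (x + 1) with htdef
  have ht : t * (x + 1) = x := div_mul_cancel₀ x hx1.ne'
  have hbern : 1 + (p + 1) * (t - 1) ≤ t ^ (p + 1) := by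
    have h := one_add_mul_self_le_rpow_one_add (s := t - 1) (by linarith) (p := p + 1) (by linarith)
    simpa using h
  set T : ℝ := t ^ p with hTdef
  have hTpos : 0 < T := Real.rpow_pos_of_pos ht0 p
  have hsplit : t ^ (p + 1) = T * t := by
    rw [hTdef, Real.rpow_add_one ht0.ne']
  rw [hsplit] at hbern
  -- key : x - p ≤ T * x
  have key : x - p ≤ T * x := by
    have h2 := mul_le_mul_of_nonneg_right hbern hx1.le
    have e1 : (1 + (p + 1) * (t - 1)) * (x + 1)
        = (x + 1) + (p + 1) * (t * (x + 1) - (x + 1)) := by ring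
    have e2 : T * t * (x + 1) = T * (t * (x + 1)) := by ring
    rw [e1, e2, ht] at h2
    linarith
  -- now convert to rpow form
  set A : ℝ := x ^ p with hAdef
  set B : ℝ := (x + 1) ^ p with hBdef
  have hA : 0 < A := Real.rpow_pos_of_pos hx0 p
  have hB : 0 < B := Real.rpow_pos_of_pos hx1 p
  have hTAB : T = A / B := by rw [hTdef, hAdef, hBdef, htdef, Real.div_rpow hx0.le hx1.le]
  have hxA : x ^ (-p) = A⁻¹ := by rw [hAdef, Real.rpow_neg hx0.le]
  have hxB : (x + 1) ^ (-p) = B⁻¹ := by rw [hBdef, Real.rpow_neg hx1.le]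
  have hxAp : x ^ (-(p + 1)) = (A * x)⁻¹ := by
    rw [hAdef, Real.rpow_neg hx0.le, Real.rpow_add hx0, Real.rpow_one]
  rw [hxA, hxB, hxAp]
  rw [hTAB] at key
  have key2 : x * (B - A) ≤ p * B := by
    have := mul_le_mul_of_nonneg_right key hB.le
    have e3 : A / B * x * B = x * A := by field_simp
    rw [e3] at this
    nlinarith
  have h1 : A⁻¹ - B⁻¹ = (B - A) / (A * B) := by field_simp
  have h2 : p * (A * x)⁻¹ = (p * B) / (A * B * x) := by field_simp
  rw [h1, h2, div_le_div_iff₀ (by positivity) (by positivity)]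
  nlinarith [mul_le_mul_of_nonneg_left key2 (mul_pos hA hB).le]


lemma abel_identity (g : ℕ → ℕ) (c : ℕ → ℝ) (N : ℕ) :
    ∑ m ∈ Finset.Icc 1 N, (g m : ℝ) * c m
      = ∑ m ∈ Finset.Icc 1 N, (∑ k ∈ Finset.Icc 1 m, (g k : ℝ)) * (c m - c (m + 1))
        + (∑ k ∈ Finset.Icc 1 N, (g k : ℝ)) * c (N + 1) := by
  induction N with
  | zero => simp
  | succ n ih =>
    rw [Finset.sum_Icc_succ_top (by omega) (fun m => (g m : ℝ) * c m), ih,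
        Finset.sum_Icc_succ_top (by omega)
          (fun m => (∑ k ∈ Finset.Icc 1 m, (g k : ℝ)) * (c m - c (m + 1))),
        Finset.sum_Icc_succ_top (by omega) (fun k => (g k : ℝ))]
    ring

lemma abel_bound {s γ D : ℝ} (hγ : 0 < γ) (hsγ : γ < s) (hD : 0 ≤ D) (g : ℕ → ℕ)
    (hg : ∀ M : ℕ, 1 ≤ M → (∑ k ∈ Finset.Icc 1 M, (g k : ℝ)) ≤ D * (M : ℝ) ^ γ) (N : ℕ) :
    ∑ m ∈ Finset.Icc 1 N, (g m : ℝ) * (m : ℝ) ^ (-s)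
      ≤ D * (s * (∑' n : ℕ, (n : ℝ) ^ (-(1 + (s - γ)))) + 1) := by
  have hsum : Summable (fun n : ℕ => (n : ℝ) ^ (-(1 + (s - γ)))) :=
    Real.summable_nat_rpow.mpr (by linarith)
  have hZ : 0 ≤ ∑' n : ℕ, (n : ℝ) ^ (-(1 + (s - γ))) :=
    tsum_nonneg fun n => Real.rpow_nonneg (Nat.cast_nonneg n) _
  have hs0 : 0 < s := lt_trans hγ hsγ
  rcases Nat.eq_zero_or_pos N with hN | hN
  · subst hN
    rw [Finset.Icc_eq_empty (by omega), Finset.sum_empty]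
    exact mul_nonneg hD (by nlinarith [hZ])
  rw [abel_identity]
  -- bound the tail term
  have htail : (∑ k ∈ Finset.Icc 1 N, (g k : ℝ)) * ((N : ℝ) + 1) ^ (-s) ≤ D := by
    have h1 : (∑ k ∈ Finset.Icc 1 N, (g k : ℝ)) ≤ D * (N : ℝ) ^ γ := hg N hN
    have hN1 : (1 : ℝ) ≤ (N : ℝ) := by exact_mod_cast hN
    have h2 : ((N : ℝ) + 1) ^ (-s) ≤ (N : ℝ) ^ (-s) :=
      Real.rpow_le_rpow_of_nonpos (by linarith) (by linarith) (by linarith)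
    have h3 : (N : ℝ) ^ γ * (N : ℝ) ^ (-s) = (N : ℝ) ^ (γ - s) := by
      rw [← Real.rpow_add (by linarith)]; ring_nf
    calc (∑ k ∈ Finset.Icc 1 N, (g k : ℝ)) * ((N : ℝ) + 1) ^ (-s)
        ≤ D * (N : ℝ) ^ γ * (N : ℝ) ^ (-s) := by
          apply mul_le_mul h1 h2 (Real.rpow_nonneg (by linarith) _)
          positivity
      _ = D * (N : ℝ) ^ (γ - s) := by rw [mul_assoc, h3]
      _ ≤ D * 1 := by
          apply mul_le_mul_of_nonneg_left _ hD
          exact Real.rpow_le_one_of_one_le_of_nonpos hN1 (by linarith)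
      _ = D := mul_one D
  have hmain : ∑ m ∈ Finset.Icc 1 N, (∑ k ∈ Finset.Icc 1 m, (g k : ℝ))
        * ((m : ℝ) ^ (-s) - ((m : ℝ) + 1) ^ (-s))
      ≤ D * (s * (∑' n : ℕ, (n : ℝ) ^ (-(1 + (s - γ))))) := by
    calc ∑ m ∈ Finset.Icc 1 N, (∑ k ∈ Finset.Icc 1 m, (g k : ℝ))
          * ((m : ℝ) ^ (-s) - ((m : ℝ) + 1) ^ (-s))
        ≤ ∑ m ∈ Finset.Icc 1 N, D * s * (m : ℝ) ^ (-(1 + (s - γ))) := by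
          apply Finset.sum_le_sum
          intro m hm
          rw [Finset.mem_Icc] at hm
          have hm1 : (1 : ℝ) ≤ (m : ℝ) := by exact_mod_cast hm.1
          have hm0 : (0 : ℝ) < (m : ℝ) := by linarith
          have hd : (m : ℝ) ^ (-s) - ((m : ℝ) + 1) ^ (-s) ≤ s * (m : ℝ) ^ (-(s + 1)) :=
            diff_rpow_le hm1 hs0
          have hdpos : 0 ≤ (m : ℝ) ^ (-s) - ((m : ℝ) + 1) ^ (-s) := by
            have := Real.rpow_le_rpow_of_nonpos hm0 (by linarith : (m:ℝ) ≤ (m:ℝ) + 1)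
              (by linarith : -s ≤ 0)
            linarith
          calc (∑ k ∈ Finset.Icc 1 m, (g k : ℝ)) * ((m : ℝ) ^ (-s) - ((m : ℝ) + 1) ^ (-s))
              ≤ (D * (m : ℝ) ^ γ) * (s * (m : ℝ) ^ (-(s + 1))) := by
                apply mul_le_mul (hg m hm.1) hd hdpos
                positivity
            _ = D * s * ((m : ℝ) ^ γ * (m : ℝ) ^ (-(s + 1))) := by ring
            _ = D * s * (m : ℝ) ^ (-(1 + (s - γ))) := by
                rw [← Real.rpow_add hm0]; ring_nf
      _ = D * s * ∑ m ∈ Finset.Icc 1 N, (m : ℝ) ^ (-(1 + (s - γ))) := by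
          rw [Finset.mul_sum]
      _ ≤ D * s * (∑' n : ℕ, (n : ℝ) ^ (-(1 + (s - γ)))) := by
          apply mul_le_mul_of_nonneg_left _ (by positivity)
          exact Summable.sum_le_tsum _ (fun n _ => Real.rpow_nonneg (Nat.cast_nonneg n) _) hsum
      _ = D * (s * (∑' n : ℕ, (n : ℝ) ^ (-(1 + (s - γ))))) := by ring
  push_cast at htail hmain ⊢
  linarith

end Aux

/-- Upper bound for the product counting function: if `F₁(X) ≤ C₁X` and
`F₂(X) ≤ C₂X^α (log X)^β`, with `b − aα > 0`, then `P_{a,b}(X) ≪ C₁C₂ X^{1/a}`. -/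
theorem prodCount_upper (a b : ℕ) (ha : 0 < a) (hb : 0 < b) (α β : ℝ)
    (hα0 : 0 < α) (hα1 : α < 1) (hβ : 0 < β) (hba : 0 < (b : ℝ) - a * α) :
    ∃ C : ℝ, 0 < C ∧ ∀ (n₁ n₂ : ℕ → ℕ) (C₁ C₂ : ℝ), 0 < C₁ → 0 < C₂ →
      (∀ X : ℝ, 1 ≤ X → (countFn n₁ X : ℝ) ≤ C₁ * X) →
      (∀ X : ℝ, 2 ≤ X → (countFn n₂ X : ℝ) ≤ C₂ * X ^ α * Real.log X ^ β) →
      (countFn n₂ 1 : ℝ) ≤ C₂ →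
      ∀ X : ℝ, 1 ≤ X →
        (prodCount a b n₁ n₂ X : ℝ) ≤ C * C₁ * C₂ * X ^ (1 / (a : ℝ)) := by
  have haR : (0:ℝ) < a := by exact_mod_cast ha
  have hbR : (0:ℝ) < b := by exact_mod_cast hb
  set s : ℝ := b / a with hsdef
  have hαs : α < s := by rw [hsdef, lt_div_iff₀ haR]; linarith
  have hs0 : 0 < s := div_pos hbR haR
  set γ : ℝ := (α + s) / 2 with hγdef
  have hγ0 : 0 < γ := by rw [hγdef]; linarith
  have hαγ : α < γ := by rw [hγdef]; linarith
  have hγs : γ < s := by rw [hγdef]; linarith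
  set ε : ℝ := (γ - α) / β with hεdef
  have hε : 0 < ε := div_pos (by linarith) hβ
  set K : ℝ := ε⁻¹ ^ β + 1 with hKdef
  have hK1 : (1:ℝ) ≤ K := by
    have : (0:ℝ) ≤ ε⁻¹ ^ β := Real.rpow_nonneg (inv_nonneg.mpr hε.le) β
    rw [hKdef]; linarith
  have hK0 : (0:ℝ) < K := by linarith
  set Z : ℝ := ∑' n : ℕ, (n : ℝ) ^ (-(1 + (s - γ))) with hZdef
  have hZ0 : 0 ≤ Z := tsum_nonneg fun n => Real.rpow_nonneg (Nat.cast_nonneg n) _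
  refine ⟨K * (s * Z + 1), mul_pos hK0 (by nlinarith : (0:ℝ) < s * Z + 1), ?_⟩
  intro n₁ n₂ C₁ C₂ hC₁ hC₂ hF₁ hF₂ hF₂1 X hX
  have hX0 : (0:ℝ) < X := by linarith
  -- Step A: power-type bound for the counting function of n₂ at naturals
  have hG : ∀ M : ℕ, 1 ≤ M → (∑ k ∈ Finset.Icc 1 M, (n₂ k : ℝ)) ≤ (C₂ * K) * (M : ℝ) ^ γ := by
    intro M hM
    have hMR1 : (1:ℝ) ≤ (M:ℝ) := by exact_mod_cast hM
    have hM0 : (0:ℝ) < (M:ℝ) := by linarith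
    have hcount : (∑ k ∈ Finset.Icc 1 M, (n₂ k : ℝ)) = ((countFn n₂ (M:ℝ) : ℕ) : ℝ) := by
      unfold countFn
      rw [Nat.floor_natCast]
      push_cast
      rfl
    have hMγ : (1:ℝ) ≤ (M:ℝ) ^ γ := Real.one_le_rpow hMR1 hγ0.le
    rcases le_or_gt 2 M with hM2 | hM2
    · have hM2R : (2:ℝ) ≤ (M:ℝ) := by exact_mod_cast hM2
      have hlog : Real.log (M:ℝ) ^ β ≤ ε⁻¹ ^ β * (M:ℝ) ^ (γ - α) := by
        have h1 : Real.log (M:ℝ) ≤ (M:ℝ) ^ ε / ε := Real.log_le_rpow_div hM0.le hε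
        have h2 : Real.log (M:ℝ) ^ β ≤ ((M:ℝ) ^ ε / ε) ^ β :=
          Real.rpow_le_rpow (Real.log_nonneg hMR1) h1 hβ.le
        have h3 : ((M:ℝ) ^ ε / ε) ^ β = ((M:ℝ) ^ ε) ^ β * ε⁻¹ ^ β := by
          rw [div_eq_mul_inv,
            Real.mul_rpow (Real.rpow_nonneg hM0.le _) (inv_nonneg.mpr hε.le)]
        have h4 : ((M:ℝ) ^ ε) ^ β = (M:ℝ) ^ (γ - α) := by
          rw [← Real.rpow_mul hM0.le, hεdef, div_mul_cancel₀ _ hβ.ne']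
        rw [h3, h4] at h2
        linarith [h2]
      have hpow : (M:ℝ) ^ α * (M:ℝ) ^ (γ - α) = (M:ℝ) ^ γ := by
        rw [← Real.rpow_add hM0]; ring_nf
      have hεK : ε⁻¹ ^ β ≤ K := by rw [hKdef]; linarith
      have hMα : (0:ℝ) ≤ (M:ℝ) ^ α := Real.rpow_nonneg hM0.le _
      have hMγα : (0:ℝ) ≤ (M:ℝ) ^ (γ - α) := Real.rpow_nonneg hM0.le _
      calc (∑ k ∈ Finset.Icc 1 M, (n₂ k : ℝ))
          = ((countFn n₂ (M:ℝ) : ℕ) : ℝ) := hcount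
        _ ≤ C₂ * (M:ℝ) ^ α * Real.log (M:ℝ) ^ β := hF₂ _ hM2R
        _ ≤ C₂ * (M:ℝ) ^ α * (ε⁻¹ ^ β * (M:ℝ) ^ (γ - α)) := by
            apply mul_le_mul_of_nonneg_left hlog (by positivity)
        _ = C₂ * ε⁻¹ ^ β * ((M:ℝ) ^ α * (M:ℝ) ^ (γ - α)) := by ring
        _ = C₂ * ε⁻¹ ^ β * (M:ℝ) ^ γ := by rw [hpow]
        _ ≤ (C₂ * K) * (M : ℝ) ^ γ := by
            apply mul_le_mul_of_nonneg_right _ (by positivity)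
            exact mul_le_mul_of_nonneg_left hεK hC₂.le
    · have hM1 : M = 1 := by omega
      subst hM1
      rw [hcount]
      have h1 : ((countFn n₂ ((1:ℕ):ℝ) : ℕ) : ℝ) ≤ C₂ := by
        norm_num
        exact_mod_cast hF₂1
      calc ((countFn n₂ ((1:ℕ):ℝ) : ℕ) : ℝ) ≤ C₂ := h1
        _ ≤ (C₂ * K) * ((1:ℕ) : ℝ) ^ γ := by
            push_cast
            rw [Real.one_rpow, mul_one]
            nlinarith
  -- Step B: rewrite prodCount as a nested sum
  have hrw : (prodCount a b n₁ n₂ X : ℝ)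
      = ∑ r₂ ∈ Finset.Icc 1 ⌊X⌋₊,
          (n₂ r₂ : ℝ) * (countFn n₁ ((X / (r₂:ℝ) ^ b) ^ ((a:ℝ)⁻¹)) : ℝ) := by
    classical
    unfold prodCount
    push_cast
    rw [Finset.sum_filter, Finset.sum_product_right]
    apply Finset.sum_congr rfl
    intro r₂ hr₂
    rw [Finset.mem_Icc] at hr₂
    have hr₂1 : (1:ℝ) ≤ (r₂:ℝ) := by exact_mod_cast hr₂.1
    have hr₂b1 : (1:ℝ) ≤ (r₂:ℝ) ^ b := one_le_pow₀ hr₂1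
    have hr₂b : (0:ℝ) < (r₂:ℝ) ^ b := by linarith
    set Y : ℝ := (X / (r₂:ℝ) ^ b) ^ ((a:ℝ)⁻¹) with hYdef
    have hq0 : (0:ℝ) ≤ X / (r₂:ℝ) ^ b := by positivity
    have hY0 : 0 ≤ Y := Real.rpow_nonneg hq0 _
    have hYa : Y ^ a = X / (r₂:ℝ) ^ b := Real.rpow_inv_natCast_pow hq0 ha.ne'
    have hYX : Y ≤ X := by
      have h1 : Y ^ a ≤ X ^ a := by
        rw [hYa]
        calc X / (r₂:ℝ) ^ b ≤ X := div_le_self hX0.le hr₂b1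
          _ ≤ X ^ a := le_self_pow₀ hX ha.ne'
      exact le_of_pow_le_pow_left₀ ha.ne' hX0.le h1
    have hfloorY : ⌊Y⌋₊ ≤ ⌊X⌋₊ := Nat.floor_le_floor hYX
    have hcond : ∀ r₁ : ℕ, 1 ≤ r₁ → (((r₁:ℝ)) ^ a * (r₂:ℝ) ^ b ≤ X ↔ r₁ ≤ ⌊Y⌋₊) := by
      intro r₁ hr₁
      rw [Nat.le_floor_iff hY0]
      constructor
      · intro h
        have h1 : (r₁:ℝ) ^ a ≤ X / (r₂:ℝ) ^ b := (le_div_iff₀ hr₂b).mpr h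
        rw [← hYa] at h1
        exact le_of_pow_le_pow_left₀ ha.ne' hY0 h1
      · intro h
        have h1 : (r₁:ℝ) ^ a ≤ Y ^ a := pow_le_pow_left₀ (by positivity) h a
        rw [hYa] at h1
        exact (le_div_iff₀ hr₂b).mp h1
    have hinner : ∑ r₁ ∈ Finset.Icc 1 ⌊X⌋₊,
          (if ((r₁:ℝ)) ^ a * (r₂:ℝ) ^ b ≤ X then (n₁ r₁ : ℝ) * (n₂ r₂ : ℝ) else 0)
        = ∑ r₁ ∈ Finset.Icc 1 ⌊Y⌋₊, (n₁ r₁ : ℝ) * (n₂ r₂ : ℝ) := by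
      rw [← Finset.sum_filter]
      apply Finset.sum_congr _ (fun _ _ => rfl)
      ext r₁
      simp only [Finset.mem_filter, Finset.mem_Icc]
      constructor
      · rintro ⟨⟨h1, h2⟩, h3⟩; exact ⟨h1, (hcond r₁ h1).mp h3⟩
      · rintro ⟨h1, h2⟩; exact ⟨⟨h1, le_trans h2 hfloorY⟩, (hcond r₁ h1).mpr h2⟩
    have hcnt : ((countFn n₁ Y : ℕ) : ℝ) = ∑ r₁ ∈ Finset.Icc 1 ⌊Y⌋₊, (n₁ r₁ : ℝ) := by
      unfold countFn; push_cast; rfl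
    calc ∑ r₁ ∈ Finset.Icc 1 ⌊X⌋₊,
          (if ((r₁:ℝ)) ^ a * (r₂:ℝ) ^ b ≤ X then (n₁ r₁ : ℝ) * (n₂ r₂ : ℝ) else 0)
        = ∑ r₁ ∈ Finset.Icc 1 ⌊Y⌋₊, (n₁ r₁ : ℝ) * (n₂ r₂ : ℝ) := hinner
      _ = (n₂ r₂ : ℝ) * ∑ r₁ ∈ Finset.Icc 1 ⌊Y⌋₊, (n₁ r₁ : ℝ) := by
          rw [Finset.mul_sum]; apply Finset.sum_congr rfl; intros; ring
      _ = (n₂ r₂ : ℝ) * ((countFn n₁ Y : ℕ) : ℝ) := by rw [hcnt]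
  -- Step C: bound each inner counting function
  have hbound : (prodCount a b n₁ n₂ X : ℝ)
      ≤ C₁ * X ^ ((a:ℝ)⁻¹) * ∑ r₂ ∈ Finset.Icc 1 ⌊X⌋₊, (n₂ r₂ : ℝ) * (r₂:ℝ) ^ (-s) := by
    rw [hrw, Finset.mul_sum]
    apply Finset.sum_le_sum
    intro r₂ hr₂
    rw [Finset.mem_Icc] at hr₂
    have hr₂1 : (1:ℝ) ≤ (r₂:ℝ) := by exact_mod_cast hr₂.1
    have hr₂0 : (0:ℝ) < (r₂:ℝ) := by linarith
    have hr₂b1 : (1:ℝ) ≤ (r₂:ℝ) ^ b := one_le_pow₀ hr₂1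
    have hr₂b : (0:ℝ) < (r₂:ℝ) ^ b := by linarith
    set Y : ℝ := (X / (r₂:ℝ) ^ b) ^ ((a:ℝ)⁻¹) with hYdef
    have hq0 : (0:ℝ) < X / (r₂:ℝ) ^ b := by positivity
    have hY0 : 0 < Y := Real.rpow_pos_of_pos hq0 _
    have hYC : ((countFn n₁ Y : ℕ) : ℝ) ≤ C₁ * Y := by
      rcases le_or_gt 1 Y with h | h
      · exact hF₁ Y h
      · have h0 : ⌊Y⌋₊ = 0 := Nat.floor_eq_zero.mpr h
        unfold countFn
        rw [h0]
        simp only [Finset.Icc_eq_empty_of_lt (by omega : (0:ℕ) < 1), Finset.sum_empty,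
          Nat.cast_zero]
        positivity
    have hYeq : Y = X ^ ((a:ℝ)⁻¹) * (r₂:ℝ) ^ (-s) := by
      rw [hYdef, Real.div_rpow hX0.le hr₂b.le, ← Real.rpow_natCast (r₂:ℝ) b,
        ← Real.rpow_mul hr₂0.le,
        show (b:ℝ) * (a:ℝ)⁻¹ = s by rw [hsdef]; ring,
        Real.rpow_neg hr₂0.le, div_eq_mul_inv]
    calc (n₂ r₂ : ℝ) * ((countFn n₁ Y : ℕ) : ℝ)
        ≤ (n₂ r₂ : ℝ) * (C₁ * Y) := by
          apply mul_le_mul_of_nonneg_left hYC (by positivity)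
      _ = C₁ * X ^ ((a:ℝ)⁻¹) * ((n₂ r₂ : ℝ) * (r₂:ℝ) ^ (-s)) := by rw [hYeq]; ring
  -- Step D: conclude with Abel summation bound
  have habel := abel_bound hγ0 hγs (by positivity : (0:ℝ) ≤ C₂ * K) n₂ hG ⌊X⌋₊
  rw [one_div]
  have hXa : (0:ℝ) ≤ X ^ ((a:ℝ)⁻¹) := Real.rpow_nonneg hX0.le _
  calc (prodCount a b n₁ n₂ X : ℝ)
      ≤ C₁ * X ^ ((a:ℝ)⁻¹) * ∑ r₂ ∈ Finset.Icc 1 ⌊X⌋₊, (n₂ r₂ : ℝ) * (r₂:ℝ) ^ (-s) := hbound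
    _ ≤ C₁ * X ^ ((a:ℝ)⁻¹) * ((C₂ * K) * (s * Z + 1)) := by
        apply mul_le_mul_of_nonneg_left _ (by positivity)
        exact habel
    _ = K * (s * Z + 1) * C₁ * C₂ * X ^ ((a:ℝ)⁻¹) := by ring
end

section
/- Let a, b be positive integers and α ∈ (0,1) with b − a·α > 0. Let n₁, n₂ : ℤ_{≥1} → ℕ be multiplicity functions with counting functions F₁, F₂, and suppose n₂(m) > 0 for some integer m ≥ 2. Suppose there exist constants c₁, c₂ > 0 such that c₁·X ≤ F₁(X) and c₂·X^α ≤ F₂(X) for all X ≥ 1. Set c := min{c₁c₂, c₁c₂·(a/(b − a·α))·(1 − 2^{α − b/a})}. Then for all sufficiently large X, P_{a,b}(X) ≥ c·X^{1/a}. -/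
/-- Lower bound for the product counting function: if `c₁X ≤ F₁(X)` and `c₂X^α ≤ F₂(X)`,
with `b − aα > 0` and the second multiset containing some integer `≥ 2`, then for all
sufficiently large `X`, `P_{a,b}(X) ≥ c·X^{1/a}` with
`c = min(c₁c₂, c₁c₂·(a/(b−aα))·(1 − 2^{α−b/a}))`. -/
theorem prodCount_lower (a b : ℕ) (ha : 0 < a) (hb : 0 < b) (α : ℝ)
    (hα0 : 0 < α) (hα1 : α < 1) (hba : 0 < (b : ℝ) - a * α)
    (n₁ n₂ : ℕ → ℕ) (hm : ∃ m : ℕ, 2 ≤ m ∧ 0 < n₂ m)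
    (c₁ c₂ : ℝ) (hc₁ : 0 < c₁) (hc₂ : 0 < c₂)
    (h1 : ∀ X : ℝ, 1 ≤ X → c₁ * X ≤ (countFn n₁ X : ℝ))
    (h2 : ∀ X : ℝ, 1 ≤ X → c₂ * X ^ α ≤ (countFn n₂ X : ℝ)) :
    ∃ X₀ : ℝ, ∀ X : ℝ, X₀ ≤ X →
      min (c₁ * c₂) (c₁ * c₂ * ((a : ℝ) / ((b : ℝ) - a * α)) * (1 - (2 : ℝ) ^ (α - (b : ℝ) / a)))
          * X ^ (1 / (a : ℝ)) ≤ (prodCount a b n₁ n₂ X : ℝ) := by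
  classical
  refine ⟨1, fun X hX => ?_⟩
  have ha' : (0:ℝ) < a := by exact_mod_cast ha
  have hX0 : (0:ℝ) < X := lt_of_lt_of_le one_pos hX
  set Y : ℝ := X ^ (1 / (a:ℝ)) with hYdef
  have hY1 : 1 ≤ Y := Real.one_le_rpow hX (by positivity)
  have hY0 : (0:ℝ) ≤ Y := le_trans zero_le_one hY1
  have hYa : Y ^ a = X := by
    rw [hYdef, ← Real.rpow_natCast (X ^ (1/(a:ℝ))) a, ← Real.rpow_mul hX0.le,
      one_div, inv_mul_cancel₀ ha'.ne', Real.rpow_one]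
  have hYX : Y ≤ X := by
    calc Y ≤ X ^ (1:ℝ) := Real.rpow_le_rpow_of_exponent_le hX (by
            rw [div_le_one ha']; exact_mod_cast ha)
    _ = X := Real.rpow_one X
  have hn2 : c₂ ≤ (n₂ 1 : ℝ) := by
    have := h2 1 le_rfl
    simpa [countFn, Real.one_rpow] using this
  have hX1 : 1 ≤ ⌊X⌋₊ := Nat.le_floor (by exact_mod_cast hX)
  have hsub : (Finset.Icc 1 ⌊Y⌋₊ ×ˢ Finset.Icc 1 1) ⊆
      (Finset.Icc 1 ⌊X⌋₊ ×ˢ Finset.Icc 1 ⌊X⌋₊).filter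
        (fun p : ℕ × ℕ => (p.1 : ℝ) ^ a * (p.2 : ℝ) ^ b ≤ X) := by
    intro p hp
    simp only [Finset.mem_product, Finset.mem_Icc, Finset.mem_filter] at hp ⊢
    obtain ⟨⟨h11, h12⟩, h21, h22⟩ := hp
    have hp2 : p.2 = 1 := le_antisymm h22 h21
    have hpY : (p.1 : ℝ) ≤ Y :=
      le_trans (Nat.cast_le.mpr h12) (Nat.floor_le hY0)
    refine ⟨⟨⟨h11, le_trans h12 (Nat.floor_le_floor hYX)⟩, by omega, by omega⟩, ?_⟩
    rw [hp2]
    simp only [Nat.cast_one, one_pow, mul_one]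
    calc (p.1:ℝ)^a ≤ Y^a := pow_le_pow_left₀ (by positivity) hpY a
      _ = X := hYa
  have hsum : (countFn n₁ Y) * n₂ 1 ≤ prodCount a b n₁ n₂ X := by
    have : (countFn n₁ Y) * n₂ 1
        = ∑ p ∈ Finset.Icc 1 ⌊Y⌋₊ ×ˢ Finset.Icc 1 1, n₁ p.1 * n₂ p.2 := by
      rw [countFn, Finset.sum_mul, Finset.sum_product]
      simp
    rw [this, prodCount]
    exact Finset.sum_le_sum_of_subset_of_nonneg hsub (fun _ _ _ => Nat.zero_le _)
  calc min (c₁ * c₂) (c₁ * c₂ * ((a : ℝ) / ((b : ℝ) - a * α)) *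
          (1 - (2 : ℝ) ^ (α - (b : ℝ) / a))) * X ^ (1 / (a : ℝ))
      ≤ (c₁ * c₂) * Y :=
        mul_le_mul_of_nonneg_right (min_le_left _ _) (by positivity)
    _ = (c₁ * Y) * c₂ := by ring
    _ ≤ (countFn n₁ Y : ℝ) * (n₂ 1 : ℝ) :=
        mul_le_mul (h1 Y hY1) hn2 hc₂.le (Nat.cast_nonneg _)
    _ = ((countFn n₁ Y * n₂ 1 : ℕ) : ℝ) := by push_cast; ring
    _ ≤ (prodCount a b n₁ n₂ X : ℝ) := by exact_mod_cast hsum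
end
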